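/- Let a > 0 and b > 0, and set c = √(a² + 2ab), A = a + b + c and B = b/A. For a nonnegative integer k define the Hermite function h_k : ℝ → ℝ by h_k(x) = (2c)^{1/4}·exp(−c·x²)·H_k(√(2c)·x), where H_k(x) = (2^k·k!·√π)^{−1/2}·(−1)^k·exp(x²)·(d^k/dx^k)exp(−x²) is the normalized physicists' Hermite polynomial. Then for every integer d ≥ 1, every multi-index α = (α₁,…,α_d) ∈ ℕ^d, and every s' ∈ ℝ^d, ∫_{ℝ^d} exp(−a‖s‖₂² − a‖s'‖₂² − b‖s − s'‖₂²)·∏_{i=1}^d h_{α_i}(s_i) ds = (π/A)^{d/2}·B^{|α|}·∏_{i=1}^d h_{α_i}(s'_i), where |α| = α₁ + ⋯ + α_d. In particular, ∏_{i=1}^d h_{α_i}(s_i) is an eigenfunction, with eigenvalue (π/A)^{d/2}·B^{|α|}, of the integral operator with kernel κ(s, s') = exp(−a‖s‖₂² − a‖s'‖₂² − b‖s − s'‖₂²) on ℝ^d. -/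

import Mathlib

open MeasureTheory

/-- The normalized physicists' Hermite polynomial (as a function):
`H_k(x) = (2^k k! √π)^{-1/2} (-1)^k exp(x²) (d^k/dx^k) exp(-x²)`. -/
noncomputable def hermiteNorm (k : ℕ) (x : ℝ) : ℝ :=
  ((2 ^ k * (k.factorial : ℝ) * Real.sqrt Real.pi) ^ (-(1 : ℝ) / 2)) * (-1) ^ k *
    Real.exp (x ^ 2) * iteratedDeriv k (fun t => Real.exp (-t ^ 2)) x

/-- The Hermite eigenfunction `h_k(x) = (2c)^{1/4} exp(-c x²) H_k(√(2c) x)`. -/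
noncomputable def hermiteFun (c : ℝ) (k : ℕ) (x : ℝ) : ℝ :=
  (2 * c) ^ ((1 : ℝ) / 4) * Real.exp (-c * x ^ 2) * hermiteNorm k (Real.sqrt (2 * c) * x)


/-!
The kernel factorizes over the coordinates, so it suffices to treat `d = 1`. With Mathlib's
probabilists' Hermite polynomials `He_k`, one has `H_k(x) ∝ He_k(√2 x)`, so `h_k(x)` is a multiple
of `exp(-c x²) He_k(2√c x)`. Completing the square (using `c² = a² + 2ab`) and substituting
`u = √A x` reduces the eigen-relation to
`∫ He_k(γ u) exp(-(u - w)²) du = √π β^k He_k(γ w / β)` whenever `β² = 1 - γ²/2`.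
Integration by parts gives `∫ x p(x) e^{-(x-w)²} = w ∫ p e^{-(x-w)²} + ½ ∫ p' e^{-(x-w)²}` for
every polynomial `p`, and with the recurrence `He_{k+2} = X He_{k+1} - (k+1) He_k` this proves the
identity by induction on `k`.
-/

open Polynomial Real

lemma integrable_eval_mul_exp_neg_sq (p : ℝ[X]) :
    Integrable fun x : ℝ => p.eval x * Real.exp (-x ^ 2) := by
  induction p using Polynomial.induction_on' with
  | add p q hp hq => simpa only [eval_add, add_mul] using hp.fun_add hq
  | monomial n c =>
    have h := integrable_rpow_mul_exp_neg_mul_sq one_pos (s := n)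
      (neg_one_lt_zero.trans_le n.cast_nonneg)
    simpa [Real.rpow_natCast, mul_assoc] using h.const_mul c

lemma integrable_eval_mul_exp_neg_sub_sq (p : ℝ[X]) (w : ℝ) :
    Integrable fun x : ℝ => p.eval x * Real.exp (-(x - w) ^ 2) := by
  have h := (integrable_eval_mul_exp_neg_sq (p.comp (X + C w))).comp_sub_right w
  simp only [eval_comp, eval_add, eval_X, eval_C, sub_add_cancel] at h
  exact h

noncomputable def gaussMoment (w : ℝ) : ℝ[X] →ₗ[ℝ] ℝ where
  toFun p := ∫ x, p.eval x * Real.exp (-(x - w) ^ 2)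
  map_add' p q := by
    simp only [eval_add, add_mul]
    exact integral_add (integrable_eval_mul_exp_neg_sub_sq p w)
      (integrable_eval_mul_exp_neg_sub_sq q w)
  map_smul' c p := by
    simp only [eval_smul, smul_eq_mul, mul_assoc, RingHom.id_apply]
    exact integral_const_mul c _

lemma gaussMoment_apply (w : ℝ) (p : ℝ[X]) :
    gaussMoment w p = ∫ x, p.eval x * Real.exp (-(x - w) ^ 2) :=
  rfl

lemma gaussMoment_one (w : ℝ) : gaussMoment w 1 = √π := by
  simpa [gaussMoment_apply] using
    (integral_sub_right_eq_self (fun x : ℝ => Real.exp (-1 * x ^ 2)) w).trans (integral_gaussian 1)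

lemma gaussMoment_X_mul (w : ℝ) (p : ℝ[X]) :
    gaussMoment w (X * p) = w * gaussMoment w p + gaussMoment w (derivative p) / 2 := by
  have hderiv (x : ℝ) : HasDerivAt (fun x => p.eval x * Real.exp (-(x - w) ^ 2))
      ((derivative p - (2 : ℝ) • ((X - C w) * p)).eval x * Real.exp (-(x - w) ^ 2)) x := by
    have hexp := (((hasDerivAt_id x).sub_const w).fun_pow 2).fun_neg.exp
    refine ((p.hasDerivAt x).fun_mul hexp).congr_deriv ?_
    simp only [eval_sub, eval_smul, eval_mul, eval_X, eval_C, id, smul_eq_mul]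
    ring
  have hibp : gaussMoment w (derivative p - (2 : ℝ) • ((X - C w) * p)) = 0 :=
    integral_eq_zero_of_hasDerivAt_of_integrable hderiv
      (integrable_eval_mul_exp_neg_sub_sq _ w) (integrable_eval_mul_exp_neg_sub_sq p w)
  have hX : X * p = (X - C w) * p + w • p := by rw [smul_eq_C_mul]; ring
  rw [map_sub, map_smul, smul_eq_mul] at hibp
  rw [hX, map_add, map_smul, smul_eq_mul]
  linarith

lemma derivative_hermite_succ (n : ℕ) :
    derivative (hermite (n + 1)) = (n + 1 : ℤ[X]) * hermite n := by
  induction n with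
  | zero => simp [hermite_zero]
  | succ n ih =>
    rw [hermite_succ (n + 1), derivative_sub, derivative_mul, derivative_X, ih,
      derivative_mul, derivative_add, derivative_natCast, derivative_one, hermite_succ n]
    push_cast
    ring

lemma hermite_succ_succ (n : ℕ) :
    hermite (n + 2) = X * hermite (n + 1) - (n + 1 : ℤ[X]) * hermite n := by
  rw [hermite_succ (n + 1), derivative_hermite_succ]

noncomputable def scaledHermite (γ : ℝ) (k : ℕ) : ℝ[X] :=
  ((hermite k).map (algebraMap ℤ ℝ)).comp (C γ * X)

section scaledHermite

variable (γ : ℝ)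

lemma eval_scaledHermite (k : ℕ) (x : ℝ) :
    (scaledHermite γ k).eval x = aeval (γ * x) (hermite k) := by
  simp only [scaledHermite, eval_comp, eval_mul, eval_C, eval_X, eval_map_algebraMap]

lemma scaledHermite_zero : scaledHermite γ 0 = 1 := by
  simp [scaledHermite]

lemma scaledHermite_one : scaledHermite γ 1 = γ • X := by
  simp [scaledHermite, smul_eq_C_mul]

lemma scaledHermite_succ_succ (k : ℕ) :
    scaledHermite γ (k + 2)
      = γ • (X * scaledHermite γ (k + 1)) - (k + 1 : ℝ) • scaledHermite γ k := by
  simp only [scaledHermite, hermite_succ_succ, Polynomial.map_sub, Polynomial.map_mul,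
    Polynomial.map_add, Polynomial.map_X, Polynomial.map_natCast, Polynomial.map_one, sub_comp,
    mul_comp, add_comp, X_comp, natCast_comp, one_comp, smul_eq_C_mul, C_add, C_1, C_eq_natCast]
  ring

lemma derivative_scaledHermite_succ (k : ℕ) :
    derivative (scaledHermite γ (k + 1)) = (γ * (k + 1)) • scaledHermite γ k := by
  simp only [scaledHermite, derivative_comp, derivative_map, derivative_hermite_succ,
    derivative_mul, derivative_C, derivative_X, zero_mul, mul_one, zero_add, Polynomial.map_mul,
    Polynomial.map_add, Polynomial.map_natCast, Polynomial.map_one, mul_comp, add_comp,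
    natCast_comp, one_comp, smul_eq_C_mul, C_add, C_mul, C_1, C_eq_natCast]
  ring

end scaledHermite

theorem gaussMoment_scaledHermite {γ β : ℝ} (hβ : β ≠ 0) (hβγ : β ^ 2 = 1 - γ ^ 2 / 2)
    (k : ℕ) (w : ℝ) :
    gaussMoment w (scaledHermite γ k) = √π * β ^ k * aeval (γ * w / β) (hermite k) := by
  induction k using Nat.twoStepInduction with
  | zero => simp [scaledHermite_zero, gaussMoment_one]
  | one =>
    have hX : gaussMoment w X = w * √π := by
      simpa [gaussMoment_one] using gaussMoment_X_mul w 1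
    rw [scaledHermite_one, map_smul, hX, hermite_one, aeval_X, smul_eq_mul]
    field_simp
  | more k ih₀ ih₁ =>
    rw [scaledHermite_succ_succ, map_sub, map_smul, map_smul, gaussMoment_X_mul,
      derivative_scaledHermite_succ, map_smul, ih₀, ih₁, hermite_succ_succ]
    simp only [map_sub, map_mul, map_add, map_natCast, map_one, aeval_X, smul_eq_mul]
    have hpow : β ^ (k + 2) * (γ * w / β) = γ * w * β ^ (k + 1) := by
      field_simp
      ring
    linear_combination (-(√π * aeval (γ * w / β) (hermite (k + 1)))) * hpow
      + ((k + 1) * √π * β ^ k * aeval (γ * w / β) (hermite k)) * hβγ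

lemma iteratedDeriv_exp_neg_sq (k : ℕ) (x : ℝ) :
    iteratedDeriv k (fun t => Real.exp (-t ^ 2)) x
      = √2 ^ k * ((-1) ^ k * aeval (√2 * x) (hermite k) * Real.exp (-x ^ 2)) := by
  have hsq (t : ℝ) : (√2 * t) ^ 2 / 2 = t ^ 2 := by
    rw [mul_pow, Real.sq_sqrt zero_le_two]
    ring
  have hsmooth : ContDiff ℝ k fun y : ℝ => Real.exp (-(y ^ 2 / 2)) := by fun_prop
  have h := congrFun (iteratedDeriv_comp_const_mul hsmooth √2) x
  simp only [hsq, iteratedDeriv_eq_iterate, deriv_gaussian_eq_hermite_mul_gaussian] at h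
  rw [iteratedDeriv_eq_iterate]
  exact h

lemma hermiteNorm_eq (k : ℕ) (x : ℝ) :
    hermiteNorm k x
      = (2 ^ k * k.factorial * √π) ^ (-(1 : ℝ) / 2) * √2 ^ k * aeval (√2 * x) (hermite k) := by
  have hexp : Real.exp (x ^ 2) * Real.exp (-x ^ 2) = 1 := by
    rw [← Real.exp_add, add_neg_cancel, Real.exp_zero]
  have hsign : ((-1) ^ k * (-1) ^ k : ℝ) = 1 := by
    rw [← mul_pow]
    norm_num
  rw [hermiteNorm, iteratedDeriv_exp_neg_sq]
  linear_combination (2 ^ k * k.factorial * √π) ^ (-(1 : ℝ) / 2) * √2 ^ k *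
    aeval (√2 * x) (hermite k) * ((-1) ^ k * (-1) ^ k * hexp + hsign)

noncomputable def gaussHermite (c μ : ℝ) (k : ℕ) (x : ℝ) : ℝ :=
  Real.exp (-c * x ^ 2) * aeval (μ * x) (hermite k)

lemma kernel_exponent_add_eq {a b c σ : ℝ} (hc : c ^ 2 = a ^ 2 + 2 * a * b)
    (hσ : σ ^ 2 = a + b + c) (hA : a + b + c ≠ 0) (x y : ℝ) :
    -a * x ^ 2 - a * y ^ 2 - b * (x - y) ^ 2 + -c * x ^ 2
      = -(σ * x - σ * (b / (a + b + c)) * y) ^ 2 + -c * y ^ 2 := by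
  rw [show (σ * x - σ * (b / (a + b + c)) * y) ^ 2 = σ ^ 2 * (x - b / (a + b + c) * y) ^ 2 by ring,
    hσ]
  field_simp
  linear_combination y ^ 2 * hc

theorem integral_kernel_mul_gaussHermite {a b c μ : ℝ} (hc : c ^ 2 = a ^ 2 + 2 * a * b)
    (hμ : μ ^ 2 = 4 * c) (hA : 0 < a + b + c) (hb : b ≠ 0) (k : ℕ) (y : ℝ) :
    ∫ x, Real.exp (-a * x ^ 2 - a * y ^ 2 - b * (x - y) ^ 2) * gaussHermite c μ k x
      = √(π / (a + b + c)) * (b / (a + b + c)) ^ k * gaussHermite c μ k y := by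
  set A := a + b + c
  set σ := √A
  set B := b / A
  have hσ : σ ^ 2 = A := Real.sq_sqrt hA.le
  have hσpos : 0 < σ := Real.sqrt_pos.2 hA
  have hB : B ≠ 0 := div_ne_zero hb hA.ne'
  have hBμ : B ^ 2 = 1 - (μ / σ) ^ 2 / 2 := by
    rw [div_pow, div_pow, hσ, hμ]
    field_simp
    simp only [A]
    linear_combination 2 * hc
  have hpoint (x : ℝ) :
      Real.exp (-a * x ^ 2 - a * y ^ 2 - b * (x - y) ^ 2) * gaussHermite c μ k x
        = Real.exp (-c * y ^ 2) * ((scaledHermite (μ / σ) k).eval (σ * x)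
            * Real.exp (-(σ * x - σ * B * y) ^ 2)) := by
    have hexp : Real.exp (-a * x ^ 2 - a * y ^ 2 - b * (x - y) ^ 2) * Real.exp (-c * x ^ 2)
        = Real.exp (-(σ * x - σ * B * y) ^ 2) * Real.exp (-c * y ^ 2) := by
      rw [← Real.exp_add, ← Real.exp_add, kernel_exponent_add_eq hc hσ hA.ne']
    have harg : μ / σ * (σ * x) = μ * x := by field_simp [hσpos.ne']
    rw [gaussHermite, eval_scaledHermite, harg]
    linear_combination aeval (μ * x) (hermite k) * hexp
  calc ∫ x, Real.exp (-a * x ^ 2 - a * y ^ 2 - b * (x - y) ^ 2) * gaussHermite c μ k x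
      = Real.exp (-c * y ^ 2) * ∫ x, (scaledHermite (μ / σ) k).eval (σ * x)
          * Real.exp (-(σ * x - σ * B * y) ^ 2) := by
        simp_rw [hpoint]
        exact integral_const_mul _ _
    _ = Real.exp (-c * y ^ 2) * (|σ⁻¹| * gaussMoment (σ * B * y) (scaledHermite (μ / σ) k)) := by
        rw [Measure.integral_comp_mul_left
          (fun u => (scaledHermite (μ / σ) k).eval u * Real.exp (-(u - σ * B * y) ^ 2)) σ]
        rfl
    _ = √(π / A) * B ^ k * gaussHermite c μ k y := by
        have harg : μ / σ * (σ * B * y) / B = μ * y := by field_simp [hσpos.ne']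
        rw [gaussMoment_scaledHermite hB hBμ, harg, abs_inv, abs_of_pos hσpos, gaussHermite,
          Real.sqrt_div' π hA.le]
        ring

lemma hermiteFun_eq_mul_gaussHermite (c : ℝ) (k : ℕ) (x : ℝ) :
    hermiteFun c k x = (2 * c) ^ ((1 : ℝ) / 4) * (2 ^ k * k.factorial * √π) ^ (-(1 : ℝ) / 2)
      * √2 ^ k * gaussHermite c (√2 * √(2 * c)) k x := by
  rw [hermiteFun, hermiteNorm_eq, gaussHermite, mul_assoc √2]
  ring

theorem integral_kernel_mul_hermiteFun {a b c : ℝ} (hc₀ : 0 ≤ c) (hc : c ^ 2 = a ^ 2 + 2 * a * b)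
    (hA : 0 < a + b + c) (hb : b ≠ 0) (k : ℕ) (y : ℝ) :
    ∫ x, Real.exp (-a * x ^ 2 - a * y ^ 2 - b * (x - y) ^ 2) * hermiteFun c k x
      = √(π / (a + b + c)) * (b / (a + b + c)) ^ k * hermiteFun c k y := by
  have hμ : (√2 * √(2 * c)) ^ 2 = 4 * c := by
    rw [mul_pow, Real.sq_sqrt zero_le_two, Real.sq_sqrt (by positivity)]
    ring
  simp_rw [hermiteFun_eq_mul_gaussHermite c k, mul_left_comm (Real.exp _)]
  rw [integral_const_mul, integral_kernel_mul_gaussHermite hc hμ hA hb]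
  ring

lemma exp_kernel_eq_prod {ι : Type*} [Fintype ι] (a b : ℝ) (s s' : ι → ℝ) :
    Real.exp (-a * (∑ i, s i ^ 2) - a * (∑ i, s' i ^ 2) - b * (∑ i, (s i - s' i) ^ 2))
      = ∏ i, Real.exp (-a * s i ^ 2 - a * s' i ^ 2 - b * (s i - s' i) ^ 2) := by
  rw [← Real.exp_sum]
  simp only [Finset.mul_sum, Finset.sum_sub_distrib]

theorem modified_se_kernel_eigen_general (a b : ℝ) (ha : 0 < a) (hb : 0 < b)
    (d : ℕ) (α : Fin d → ℕ) (s' : Fin d → ℝ) :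
    (∫ s : Fin d → ℝ,
        Real.exp (-a * (∑ i, (s i) ^ 2) - a * (∑ i, (s' i) ^ 2)
            - b * (∑ i, (s i - s' i) ^ 2)) *
          ∏ i, hermiteFun (Real.sqrt (a ^ 2 + 2 * a * b)) (α i) (s i))
      = (Real.pi / (a + b + Real.sqrt (a ^ 2 + 2 * a * b))) ^ ((d : ℝ) / 2) *
          (b / (a + b + Real.sqrt (a ^ 2 + 2 * a * b))) ^ (∑ i, α i) *
          ∏ i, hermiteFun (Real.sqrt (a ^ 2 + 2 * a * b)) (α i) (s' i) := by
  have hc₀ := Real.sqrt_nonneg (a ^ 2 + 2 * a * b)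
  have hc := Real.sq_sqrt (by positivity : 0 ≤ a ^ 2 + 2 * a * b)
  have hA : 0 < a + b + √(a ^ 2 + 2 * a * b) := by positivity
  simp_rw [exp_kernel_eq_prod, ← Finset.prod_mul_distrib]
  rw [integral_fintype_prod_volume_eq_prod fun i x => Real.exp (-a * x ^ 2 - a * s' i ^ 2
    - b * (x - s' i) ^ 2) * hermiteFun √(a ^ 2 + 2 * a * b) (α i) x]
  simp_rw [integral_kernel_mul_hermiteFun hc₀ hc hA hb.ne']
  rw [Finset.prod_mul_distrib, Finset.prod_mul_distrib, Finset.prod_const, Finset.card_univ,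
    Fintype.card_fin, Finset.prod_pow_eq_pow_sum, Real.rpow_div_two_eq_sqrt _ (by positivity),
    Real.rpow_natCast]

/-- Eigen-relation for the modified square exponential kernel
`κ(s,s') = exp(-a‖s‖² - a‖s'‖² - b‖s-s'‖²)` on `ℝ^d`: with `c = √(a²+2ab)`,
`A = a + b + c` and `B = b/A`, the product of Hermite eigenfunctions
`∏ᵢ h_{αᵢ}(sᵢ)` is an eigenfunction with eigenvalue `(π/A)^{d/2} B^{|α|}`, i.e.
`∫_{ℝ^d} κ(s,s') ∏ᵢ h_{αᵢ}(sᵢ) ds = (π/A)^{d/2} B^{|α|} ∏ᵢ h_{αᵢ}(s'ᵢ)`. -/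
theorem modified_se_kernel_eigen (a b : ℝ) (ha : 0 < a) (hb : 0 < b)
    (d : ℕ) (hd : 1 ≤ d) (α : Fin d → ℕ) (s' : Fin d → ℝ) :
    (∫ s : Fin d → ℝ,
        Real.exp (-a * (∑ i, (s i) ^ 2) - a * (∑ i, (s' i) ^ 2)
            - b * (∑ i, (s i - s' i) ^ 2)) *
          ∏ i, hermiteFun (Real.sqrt (a ^ 2 + 2 * a * b)) (α i) (s i))
      = (Real.pi / (a + b + Real.sqrt (a ^ 2 + 2 * a * b))) ^ ((d : ℝ) / 2) *
          (b / (a + b + Real.sqrt (a ^ 2 + 2 * a * b))) ^ (∑ i, α i) *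
          ∏ i, hermiteFun (Real.sqrt (a ^ 2 + 2 * a * b)) (α i) (s' i) :=
  modified_se_kernel_eigen_general a b ha hb d α s'
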